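/- arXiv:2502.10665 — 4 statements merged into one kernel-verified Lean document; each statement's English description precedes it below -/
import Mathlib

section
/- Let t_1, …, t_{n+1} ∈ ℂ be n + 1 distinct nodes, let 0 ≤ ℓ ≤ n + 1, and let y_1, …, y_ℓ ∈ ℂ. Let r = p/q be a rational function of type (n, n), i.e., p, q ∈ ℂ[X] coprime with q ≠ 0, deg p ≤ n, deg q ≤ n, and suppose r satisfies the interpolation conditions r(t_j) = y_j for j = 1, …, ℓ, i.e., q(t_j) ≠ 0 and p(t_j) = y_j·q(t_j) for all j ∈ {1, …, ℓ}. Then there exist weights β = (β_1, …, β_{n+1}) ∈ ℂ^{n+1} and α = (α_{ℓ+1}, …, α_{n+1}) ∈ ℂ^{n+1−ℓ} such that, setting D(X) = Σ_{j=1}^{n+1} β_j ∏_{k≠j} (X − t_k) and N(X) = Σ_{j=1}^{ℓ} β_j y_j ∏_{k≠j} (X − t_k) + Σ_{j=ℓ+1}^{n+1} α_j ∏_{k≠j} (X − t_k), one has D ≠ 0 and p·D = q·N in ℂ[X]; moreover, for each j with ℓ + 1 ≤ j ≤ n + 1 such that t_j is a pole of r (i.e., q(t_j) = 0), the corresponding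 weight satisfies β_j = 0. -/
/-!
Lagrange interpolation at the n + 1 nodes, written in barycentric form, reproduces every
polynomial of degree at most n. Taking the weights β_j = q(t_j) w_j and α_j = p(t_j) w_j,
with w_j the nodal weights, therefore gives D = q and N = p (the interpolation conditions
say β_j y_j = p(t_j) w_j for j ≤ ℓ), so p D = q N, D ≠ 0, and β_j = 0 at the poles of r.
-/

open Polynomial Finset

namespace Lagrange

variable {F ι : Type*} [Field F] [DecidableEq ι] {s : Finset ι} {v : ι → F}

theorem basis_eq_C_nodalWeight_mul_nodal_erase {i : ι} (hi : i ∈ s) :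
    Lagrange.basis s v i = C (nodalWeight s v i) * nodal (s.erase i) v := by
  rw [basis_eq_prod_sub_inv_mul_nodal_div hi, nodal_erase_eq_nodal_div hi]

theorem sum_C_eval_mul_nodalWeight_mul_prod_erase (hvs : Set.InjOn v s) {f : F[X]}
    (hf : f.degree < #s) :
    ∑ i ∈ s, C (f.eval (v i) * nodalWeight s v i) * ∏ j ∈ s.erase i, (X - C (v j)) = f := by
  conv_rhs => rw [eq_interpolate hvs hf, interpolate_apply]
  refine sum_congr rfl fun i hi => ?_
  rw [basis_eq_C_nodalWeight_mul_nodal_erase hi, nodal, map_mul, mul_assoc]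

end Lagrange

theorem barycentric_parameterization_interp_general (n ℓ : ℕ)
    (t : Fin (n + 1) → ℂ) (ht : Function.Injective t)
    (y : Fin (n + 1) → ℂ)
    (p q : Polynomial ℂ) (hq : q ≠ 0)
    (hpdeg : p.degree ≤ (n : WithBot ℕ)) (hqdeg : q.degree ≤ (n : WithBot ℕ))
    (hinterp : ∀ j : Fin (n + 1), (j : ℕ) < ℓ →
      q.eval (t j) ≠ 0 ∧ p.eval (t j) = y j * q.eval (t j)) :
    ∃ β α : Fin (n + 1) → ℂ,
      (∑ j : Fin (n + 1), Polynomial.C (β j) *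
          ∏ k ∈ Finset.univ.erase j, (Polynomial.X - Polynomial.C (t k))) ≠ 0 ∧
      p * (∑ j : Fin (n + 1), Polynomial.C (β j) *
          ∏ k ∈ Finset.univ.erase j, (Polynomial.X - Polynomial.C (t k))) =
      q * (∑ j : Fin (n + 1),
            Polynomial.C (if (j : ℕ) < ℓ then β j * y j else α j) *
          ∏ k ∈ Finset.univ.erase j, (Polynomial.X - Polynomial.C (t k))) ∧
      (∀ j : Fin (n + 1), ℓ ≤ (j : ℕ) → q.eval (t j) = 0 → β j = 0) := by
  set w := Lagrange.nodalWeight univ t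
  have barycentric (f : ℂ[X]) (hf : f.degree ≤ n) :
      ∑ j, C (f.eval (t j) * w j) * ∏ k ∈ univ.erase j, (X - C (t k)) = f := by
    refine Lagrange.sum_C_eval_mul_nodalWeight_mul_prod_erase ht.injOn (hf.trans_lt ?_)
    rw [card_univ, Fintype.card_fin]
    exact_mod_cast n.lt_succ_self
  refine ⟨fun j => q.eval (t j) * w j, fun j => p.eval (t j) * w j, ?_, ?_, ?_⟩
  · rwa [barycentric q hqdeg]
  · have numerator_eq : ∑ j : Fin (n + 1),
          C (if (j : ℕ) < ℓ then q.eval (t j) * w j * y j else p.eval (t j) * w j) *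
            ∏ k ∈ univ.erase j, (X - C (t k)) =
        ∑ j : Fin (n + 1), C (p.eval (t j) * w j) * ∏ k ∈ univ.erase j, (X - C (t k)) := by
      refine sum_congr rfl fun j _ => ?_
      split_ifs with hj
      · rw [(hinterp j hj).2, mul_right_comm, mul_comm (y j)]
      · rfl
    rw [numerator_eq, barycentric p hpdeg, barycentric q hqdeg, mul_comm]
  · intro j _ hpole
    simp only [hpole, zero_mul]

/-- **Interpolation-constrained barycentric parameterization** (Theorem 2.2 of the
paper). Given n+1 distinct support points t_1, …, t_{n+1}, 0 ≤ ℓ ≤ n+1, and values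
y_1, …, y_ℓ, any rational function r = p/q of type (n,n) (p, q coprime, q ≠ 0,
deg p ≤ n, deg q ≤ n) satisfying r(t_j) = y_j for j ≤ ℓ can be written in the
interpolation-constrained barycentric form: there exist weights β ∈ ℂ^{n+1} and
α (indexed by j ≥ ℓ) such that, with
D(X) = Σ_{j} β_j ∏_{k≠j}(X − t_k) and
N(X) = Σ_{j<ℓ} β_j y_j ∏_{k≠j}(X − t_k) + Σ_{j≥ℓ} α_j ∏_{k≠j}(X − t_k),
one has D ≠ 0 and p·D = q·N; and β_j = 0 whenever j ≥ ℓ and t_j is a pole of r. -/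
theorem barycentric_parameterization_interp (n ℓ : ℕ) (hℓ : ℓ ≤ n + 1)
    (t : Fin (n + 1) → ℂ) (ht : Function.Injective t)
    (y : Fin (n + 1) → ℂ)
    (p q : Polynomial ℂ) (hq : q ≠ 0) (hcop : IsCoprime p q)
    (hpdeg : p.degree ≤ (n : WithBot ℕ)) (hqdeg : q.degree ≤ (n : WithBot ℕ))
    (hinterp : ∀ j : Fin (n + 1), (j : ℕ) < ℓ →
      q.eval (t j) ≠ 0 ∧ p.eval (t j) = y j * q.eval (t j)) :
    ∃ β α : Fin (n + 1) → ℂ,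
      (∑ j : Fin (n + 1), Polynomial.C (β j) *
          ∏ k ∈ Finset.univ.erase j, (Polynomial.X - Polynomial.C (t k))) ≠ 0 ∧
      p * (∑ j : Fin (n + 1), Polynomial.C (β j) *
          ∏ k ∈ Finset.univ.erase j, (Polynomial.X - Polynomial.C (t k))) =
      q * (∑ j : Fin (n + 1),
            Polynomial.C (if (j : ℕ) < ℓ then β j * y j else α j) *
          ∏ k ∈ Finset.univ.erase j, (Polynomial.X - Polynomial.C (t k))) ∧
      (∀ j : Fin (n + 1), ℓ ≤ (j : ℕ) → q.eval (t j) = 0 → β j = 0) :=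
  barycentric_parameterization_interp_general n ℓ t ht y p q hq hpdeg hqdeg hinterp
end

section
/- (Strong duality: sufficient condition for global optimality.) Let w* ∈ S be a maximizer of the dual problem, i.e., d(w) ≤ d(w*) for all w ∈ S. Suppose the coefficient pair (α̃, β̃) attains d(w*), i.e., Σ_j w*_j |q̃(x_j)|² = 1 and Σ_j w*_j |f_j q̃(x_j) − p̃(x_j)|² = d(w*), where (p̃, q̃) is the corresponding numerator/denominator pair; suppose β̃_j ≠ 0 for all j ∈ {1, …, ℓ} and q̃(x_j) ≠ 0 for all j ∈ {1, …, m}; and suppose √(d(w*)) = e(ξ̃) := max_{1≤j≤m} |f_j − p̃(x_j)/q̃(x_j)|. Then ξ̃ = p̃/q̃ is a global solution of the interpolation-constrained minimax problem over the barycentric family: for every coefficient pair (α̂, β̂) with β̂_j ≠ 0 for all j ∈ {1, …, ℓ} and q̂(x_j) ≠ 0 for all j ∈ {1, …, m}, one has max_{1≤j≤m} |f_j − p̂(x_j)/q̂(x_j)| ≥ e(ξ̃); consequently strong duality holds: sup_{w ∈ S} d(w) = e(ξ̃)². -/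
open Finset

/-- The denominator of the interpolation-constrained barycentric form:
q(z) = Σ_{j=1}^{n+1} β_j/(z − t_j). -/
noncomputable def baryQ {n : ℕ} (t β : Fin (n + 1) → ℂ) (z : ℂ) : ℂ :=
  ∑ j, β j / (z - t j)

/-- The numerator of the interpolation-constrained barycentric form:
p(z) = Σ_{j<ℓ} β_j y_j/(z − t_j) + Σ_{j≥ℓ} α_j/(z − t_j). -/
noncomputable def baryP {n : ℕ} (ℓ : ℕ) (t y α β : Fin (n + 1) → ℂ) (z : ℂ) : ℂ :=
  ∑ j : Fin (n + 1), (if (j : ℕ) < ℓ then β j * y j else α j) / (z - t j)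

/-- The probability simplex S = {w ∈ ℝ^m : w ≥ 0, Σ_j w_j = 1}. -/
def inS {m : ℕ} (w : Fin m → ℝ) : Prop :=
  (∀ j, 0 ≤ w j) ∧ ∑ j, w j = 1

/-- The Lagrange dual function
d(w) = inf { Σ_j w_j |f_j q(x_j) − p(x_j)|² : (α, β), Σ_j w_j |q(x_j)|² = 1 }. -/
noncomputable def dualFun {n m : ℕ} (ℓ : ℕ) (t y : Fin (n + 1) → ℂ)
    (x f : Fin m → ℂ) (w : Fin m → ℝ) : ℝ :=
  sInf {r : ℝ | ∃ α β : Fin (n + 1) → ℂ,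
    (∑ j, w j * ‖baryQ t β (x j)‖ ^ 2) = 1 ∧
    r = ∑ j, w j * ‖f j * baryQ t β (x j) - baryP ℓ t y α β (x j)‖ ^ 2}

/-!
Weak duality: for w ∈ S and any pair (α, β) with q(x_j) ≠ 0 for all j, rescaling (α, β) by
`1 / √(Σ_j w_j |q(x_j)|²)` makes it feasible for `d(w)`, and since
`|f_j q(x_j) − p(x_j)| = |q(x_j)| |f_j − p(x_j)/q(x_j)|` its objective is at most
`e(p/q)² Σ_j w_j |q(x_j)|²` before rescaling, i.e. at most `e(p/q)²` after. Hence
`d(w) ≤ e(ξ)²` for every w ∈ S and every admissible ξ. Together with `e(ξ̃)² = d(w*)` this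
gives both the optimality of ξ̃ and `sup_S d = d(w*) = e(ξ̃)²`.
-/

section WeightedSums

variable {ι : Type*} [Fintype ι]

theorem sum_mul_norm_ofReal_mul_sq (w : ι → ℝ) (c : ℝ) (g : ι → ℂ) :
    ∑ j, w j * ‖(c : ℂ) * g j‖ ^ 2 = c ^ 2 * ∑ j, w j * ‖g j‖ ^ 2 := by
  rw [mul_sum]
  refine sum_congr rfl fun j _ => ?_
  rw [norm_mul, Complex.norm_real, Real.norm_eq_abs, mul_pow, sq_abs]
  ring

theorem sum_mul_norm_sq_pos {w : ι → ℝ} (hw : ∀ j, 0 ≤ w j) (hw1 : ∑ j, w j = 1)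
    {b : ι → ℂ} (hb : ∀ j, b j ≠ 0) : 0 < ∑ j, w j * ‖b j‖ ^ 2 := by
  obtain ⟨j, -, hj⟩ := exists_ne_zero_of_sum_ne_zero (hw1 ▸ one_ne_zero : ∑ j, w j ≠ 0)
  refine sum_pos' (fun i _ => mul_nonneg (hw i) (sq_nonneg _)) ⟨j, mem_univ j, ?_⟩
  exact mul_pos ((hw j).lt_of_ne' hj) (pow_pos (norm_pos_iff.2 (hb j)) 2)

theorem sum_mul_norm_mul_sub_sq_le {w : ι → ℝ} (hw : ∀ j, 0 ≤ w j) {f a b : ι → ℂ}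
    (hb : ∀ j, b j ≠ 0) {e : ℝ} (he : ∀ j, ‖f j - a j / b j‖ ≤ e) :
    ∑ j, w j * ‖f j * b j - a j‖ ^ 2 ≤ e ^ 2 * ∑ j, w j * ‖b j‖ ^ 2 := by
  rw [mul_sum]
  refine sum_le_sum fun j _ => ?_
  have hfactor : f j * b j - a j = b j * (f j - a j / b j) := by
    field_simp [hb j]
  have hle : ‖f j * b j - a j‖ ≤ ‖b j‖ * e := by
    rw [hfactor, norm_mul]
    exact mul_le_mul_of_nonneg_left (he j) (norm_nonneg _)
  calc w j * ‖f j * b j - a j‖ ^ 2 ≤ w j * (‖b j‖ * e) ^ 2 :=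
        mul_le_mul_of_nonneg_left (pow_le_pow_left₀ (norm_nonneg _) hle 2) (hw j)
    _ = e ^ 2 * (w j * ‖b j‖ ^ 2) := by ring

end WeightedSums

section Barycentric

variable {n m : ℕ} (ℓ : ℕ) (t y : Fin (n + 1) → ℂ) (x f : Fin m → ℂ)

theorem baryQ_smul (β : Fin (n + 1) → ℂ) (c z : ℂ) : baryQ t (c • β) z = c * baryQ t β z := by
  simp only [baryQ, Pi.smul_apply, smul_eq_mul, mul_sum, mul_div_assoc]

theorem baryP_smul (α β : Fin (n + 1) → ℂ) (c z : ℂ) :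
    baryP ℓ t y (c • α) (c • β) z = c * baryP ℓ t y α β z := by
  simp only [baryP, Pi.smul_apply, smul_eq_mul, mul_sum]
  refine sum_congr rfl fun j _ => ?_
  split_ifs <;> ring

theorem dualFun_nonneg {w : Fin m → ℝ} (hw : ∀ j, 0 ≤ w j) : 0 ≤ dualFun ℓ t y x f w := by
  refine Real.sInf_nonneg ?_
  rintro r ⟨α, β, -, rfl⟩
  exact sum_nonneg fun j _ => mul_nonneg (hw j) (sq_nonneg _)

theorem dualFun_le_of_feasible {w : Fin m → ℝ} (hw : ∀ j, 0 ≤ w j) (α β : Fin (n + 1) → ℂ)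
    (hfeas : ∑ j, w j * ‖baryQ t β (x j)‖ ^ 2 = 1) :
    dualFun ℓ t y x f w ≤ ∑ j, w j * ‖f j * baryQ t β (x j) - baryP ℓ t y α β (x j)‖ ^ 2 := by
  refine csInf_le ⟨0, ?_⟩ ⟨α, β, hfeas, rfl⟩
  rintro r ⟨α', β', -, rfl⟩
  exact sum_nonneg fun j _ => mul_nonneg (hw j) (sq_nonneg _)

theorem dualFun_le_sq {w : Fin m → ℝ} (hw : inS w) (α β : Fin (n + 1) → ℂ)
    (hq : ∀ j, baryQ t β (x j) ≠ 0) {e : ℝ}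
    (he : ∀ j, ‖f j - baryP ℓ t y α β (x j) / baryQ t β (x j)‖ ≤ e) :
    dualFun ℓ t y x f w ≤ e ^ 2 := by
  obtain ⟨hw0, hw1⟩ := hw
  set σ := ∑ j, w j * ‖baryQ t β (x j)‖ ^ 2
  have hσ : 0 < σ := sum_mul_norm_sq_pos hw0 hw1 hq
  set c : ℝ := (√σ)⁻¹
  have hcσ : c ^ 2 * σ = 1 := by rw [inv_pow, Real.sq_sqrt hσ.le, inv_mul_cancel₀ hσ.ne']
  have hfeas : ∑ j, w j * ‖baryQ t ((c : ℂ) • β) (x j)‖ ^ 2 = 1 := by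
    simp only [baryQ_smul]
    rw [sum_mul_norm_ofReal_mul_sq, hcσ]
  calc dualFun ℓ t y x f w
      ≤ ∑ j, w j * ‖f j * baryQ t ((c : ℂ) • β) (x j) -
          baryP ℓ t y ((c : ℂ) • α) ((c : ℂ) • β) (x j)‖ ^ 2 :=
        dualFun_le_of_feasible ℓ t y x f hw0 _ _ hfeas
    _ = c ^ 2 * ∑ j, w j * ‖f j * baryQ t β (x j) - baryP ℓ t y α β (x j)‖ ^ 2 := by
        simp only [baryQ_smul, baryP_smul, mul_left_comm (f _), ← mul_sub]
        exact sum_mul_norm_ofReal_mul_sq _ _ _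
    _ ≤ c ^ 2 * (e ^ 2 * σ) := by
        gcongr
        exact sum_mul_norm_mul_sub_sq_le hw0 hq he
    _ = e ^ 2 := by rw [mul_left_comm, hcσ, mul_one]

end Barycentric

theorem strong_duality_general {n m : ℕ} (ℓ : ℕ)
    (t : Fin (n + 1) → ℂ) (y : Fin (n + 1) → ℂ)
    (x f : Fin m → ℂ)
    (wstar : Fin m → ℝ) (hwS : inS wstar)
    (hwmax : ∀ w : Fin m → ℝ, inS w → dualFun ℓ t y x f w ≤ dualFun ℓ t y x f wstar)
    (αt βt : Fin (n + 1) → ℂ)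
    (hsd : Real.sqrt (dualFun ℓ t y x f wstar) =
      ⨆ j, ‖f j - baryP ℓ t y αt βt (x j) / baryQ t βt (x j)‖) :
    (∀ αh βh : Fin (n + 1) → ℂ,
      (∀ j : Fin (n + 1), (j : ℕ) < ℓ → βh j ≠ 0) →
      (∀ j, baryQ t βh (x j) ≠ 0) →
      (⨆ j, ‖f j - baryP ℓ t y αt βt (x j) / baryQ t βt (x j)‖) ≤
        ⨆ j, ‖f j - baryP ℓ t y αh βh (x j) / baryQ t βh (x j)‖) ∧
    sSup {r : ℝ | ∃ w : Fin m → ℝ, inS w ∧ r = dualFun ℓ t y x f w} =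
      (⨆ j, ‖f j - baryP ℓ t y αt βt (x j) / baryQ t βt (x j)‖) ^ 2 := by
  refine ⟨fun αh βh _ hq => ?_, ?_⟩
  · set eh := ⨆ j, ‖f j - baryP ℓ t y αh βh (x j) / baryQ t βh (x j)‖
    have hle : dualFun ℓ t y x f wstar ≤ eh ^ 2 :=
      dualFun_le_sq ℓ t y x f hwS αh βh hq fun j => le_ciSup (Finite.bddAbove_range
        fun j => ‖f j - baryP ℓ t y αh βh (x j) / baryQ t βh (x j)‖) j
    calc _ = √(dualFun ℓ t y x f wstar) := hsd.symm
      _ ≤ √(eh ^ 2) := Real.sqrt_le_sqrt hle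
      _ = eh := Real.sqrt_sq (Real.iSup_nonneg fun _ => norm_nonneg _)
  · have hgreatest : IsGreatest {r : ℝ | ∃ w : Fin m → ℝ, inS w ∧ r = dualFun ℓ t y x f w}
        (dualFun ℓ t y x f wstar) :=
      ⟨⟨wstar, hwS, rfl⟩, by rintro r ⟨w, hw, rfl⟩; exact hwmax w hw⟩
    rw [hgreatest.csSup_eq, ← hsd, Real.sq_sqrt (dualFun_nonneg ℓ t y x f hwS.1)]

/-- **Strong duality: sufficient condition for global optimality** (Theorem 5.2 of
the paper). If w* maximizes the dual problem, (α̃, β̃) attains d(w*) with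
β̃_j ≠ 0 for j ≤ ℓ and q̃ nonvanishing at the sample nodes, and
√(d(w*)) = e(ξ̃) = max_j |f_j − ξ̃(x_j)|, then ξ̃ = p̃/q̃ is a global solution of
the interpolation-constrained minimax problem over the barycentric family, and
strong duality sup_{w ∈ S} d(w) = e(ξ̃)² holds. -/
theorem strong_duality {n m : ℕ} (ℓ : ℕ) (hℓ : ℓ ≤ n + 1) (hm : 0 < m)
    (t : Fin (n + 1) → ℂ) (ht : Function.Injective t) (y : Fin (n + 1) → ℂ)
    (x f : Fin m → ℂ) (hxt : ∀ i j, x i ≠ t j)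
    (wstar : Fin m → ℝ) (hwS : inS wstar)
    (hwmax : ∀ w : Fin m → ℝ, inS w → dualFun ℓ t y x f w ≤ dualFun ℓ t y x f wstar)
    (αt βt : Fin (n + 1) → ℂ)
    (hfeas : (∑ j, wstar j * ‖baryQ t βt (x j)‖ ^ 2) = 1)
    (hattain : (∑ j, wstar j * ‖f j * baryQ t βt (x j) - baryP ℓ t y αt βt (x j)‖ ^ 2) =
      dualFun ℓ t y x f wstar)
    (hβ : ∀ j : Fin (n + 1), (j : ℕ) < ℓ → βt j ≠ 0)
    (hqx : ∀ j, baryQ t βt (x j) ≠ 0)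
    (hsd : Real.sqrt (dualFun ℓ t y x f wstar) =
      ⨆ j, ‖f j - baryP ℓ t y αt βt (x j) / baryQ t βt (x j)‖) :
    (∀ αh βh : Fin (n + 1) → ℂ,
      (∀ j : Fin (n + 1), (j : ℕ) < ℓ → βh j ≠ 0) →
      (∀ j, baryQ t βh (x j) ≠ 0) →
      (⨆ j, ‖f j - baryP ℓ t y αt βt (x j) / baryQ t βt (x j)‖) ≤
        ⨆ j, ‖f j - baryP ℓ t y αh βh (x j) / baryQ t βh (x j)‖) ∧
    sSup {r : ℝ | ∃ w : Fin m → ℝ, inS w ∧ r = dualFun ℓ t y x f w} =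
      (⨆ j, ‖f j - baryP ℓ t y αt βt (x j) / baryQ t βt (x j)‖) ^ 2 :=
  strong_duality_general ℓ t y x f wstar hwS hwmax αt βt hsd
end

section
/- (Complementary slackness.) Let w* ∈ S be a maximizer of the dual problem, suppose the coefficient pair (α̃, β̃) attains d(w*), i.e., Σ_j w*_j |q̃(x_j)|² = 1 and Σ_j w*_j |f_j q̃(x_j) − p̃(x_j)|² = d(w*), suppose β̃_j ≠ 0 for all j ∈ {1, …, ℓ} and q̃(x_j) ≠ 0 for all j ∈ {1, …, m}, and suppose √(d(w*)) = e(ξ̃) := max_{1≤j≤m} |f_j − p̃(x_j)/q̃(x_j)|. Then for every j ∈ {1, …, m}: w*_j · (e(ξ̃) − |f_j − p̃(x_j)/q̃(x_j)|) = 0; equivalently, whenever w*_j > 0, the node x_j is an extreme point, i.e., |f_j − p̃(x_j)/q̃(x_j)| = e(ξ̃). -/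
/-
Weight the residuals by a_i = w*_i |q̃(x_i)|² ≥ 0. Feasibility says Σ a_i = 1, and attainment together
with strong duality says Σ a_i |f_i − ξ̃(x_i)|² = e(ξ̃)². A weighted average of numbers bounded by e(ξ̃)²
can only equal e(ξ̃)² if every node of positive weight attains the bound; since q̃(x_j) ≠ 0, a_j > 0
exactly when w*_j > 0.
-/

open Finset

theorem mul_sub_eq_zero_of_sum_mul_eq_mul_sum {ι : Type*} [Fintype ι] {a g : ι → ℝ} {M : ℝ}
    (ha : ∀ i, 0 ≤ a i) (hg : ∀ i, g i ≤ M) (h : ∑ i, a i * g i = M * ∑ i, a i) (j : ι) :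
    a j * (M - g j) = 0 := by
  have hsum : ∑ i, a i * (M - g i) = 0 := by
    simp only [mul_sub, sum_sub_distrib, ← sum_mul, h]
    ring
  exact (sum_eq_zero_iff_of_nonneg fun i _ => mul_nonneg (ha i) (sub_nonneg.2 (hg i))).1 hsum j
    (mem_univ j)

theorem mul_sub_eq_zero_of_mul_sq_sub_sq_eq_zero {a g M : ℝ} (hg : 0 ≤ g) (hgM : g ≤ M)
    (h : a * (M ^ 2 - g ^ 2) = 0) : a * (M - g) = 0 := by
  rcases mul_eq_zero.1 h with ha | hsq
  · rw [ha, zero_mul]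
  · rw [(sq_eq_sq₀ (hg.trans hgM) hg).1 (sub_eq_zero.1 hsq), sub_self, mul_zero]

theorem norm_mul_sub_eq_norm_sub_div_mul_norm {f p q : ℂ} (hq : q ≠ 0) :
    ‖f * q - p‖ = ‖f - p / q‖ * ‖q‖ := by
  rw [← norm_mul, sub_mul, div_mul_cancel₀ _ hq]

theorem complementary_slackness_general {n m : ℕ} (ℓ : ℕ)
    (t : Fin (n + 1) → ℂ) (y : Fin (n + 1) → ℂ)
    (x f : Fin m → ℂ)
    (wstar : Fin m → ℝ) (hwS : inS wstar)
    (αt βt : Fin (n + 1) → ℂ)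
    (hfeas : (∑ j, wstar j * ‖baryQ t βt (x j)‖ ^ 2) = 1)
    (hattain : (∑ j, wstar j * ‖f j * baryQ t βt (x j) - baryP ℓ t y αt βt (x j)‖ ^ 2) =
      dualFun ℓ t y x f wstar)
    (hqx : ∀ j, baryQ t βt (x j) ≠ 0)
    (hsd : Real.sqrt (dualFun ℓ t y x f wstar) =
      ⨆ j, ‖f j - baryP ℓ t y αt βt (x j) / baryQ t βt (x j)‖) :
    ∀ j : Fin m,
      wstar j * ((⨆ i, ‖f i - baryP ℓ t y αt βt (x i) / baryQ t βt (x i)‖) -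
        ‖f j - baryP ℓ t y αt βt (x j) / baryQ t βt (x j)‖) = 0 := by
  intro j
  set q := fun i => baryQ t βt (x i)
  set e := fun i => ‖f i - baryP ℓ t y αt βt (x i) / q i‖
  set E := ⨆ i, e i
  have he_le : ∀ i, e i ≤ E := le_ciSup (Set.finite_range e).bddAbove
  have hdual : dualFun ℓ t y x f wstar = E ^ 2 := by
    rw [← hsd, Real.sq_sqrt]
    rw [← hattain]
    exact sum_nonneg fun i _ => mul_nonneg (hwS.1 i) (sq_nonneg _)
  have hweighted : ∑ i, wstar i * ‖q i‖ ^ 2 * e i ^ 2 = E ^ 2 * ∑ i, wstar i * ‖q i‖ ^ 2 := by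
    rw [hfeas, mul_one, ← hdual, ← hattain]
    refine sum_congr rfl fun i _ => ?_
    rw [norm_mul_sub_eq_norm_sub_div_mul_norm (hqx i)]
    ring
  have hslack := mul_sub_eq_zero_of_sum_mul_eq_mul_sum
    (fun i => mul_nonneg (hwS.1 i) (sq_nonneg ‖q i‖))
    (fun i => pow_le_pow_left₀ (norm_nonneg _) (he_le i) 2) hweighted j
  rw [mul_right_comm, mul_eq_zero, or_iff_left (pow_ne_zero 2 (norm_ne_zero_iff.2 (hqx j)))]
    at hslack
  exact mul_sub_eq_zero_of_mul_sq_sub_sq_eq_zero (norm_nonneg _) (he_le j) hslack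

/-- **Complementary slackness** (Theorem 5.2 of the paper). Under the strong-duality
conditions — w* maximizes the dual problem, (α̃, β̃) attains d(w*) with β̃_j ≠ 0
for j ≤ ℓ and q̃ nonvanishing at the sample nodes, and √(d(w*)) = e(ξ̃) — every
sample node satisfies w*_j · (e(ξ̃) − |f_j − ξ̃(x_j)|) = 0; i.e. every node
carrying positive weight is an extreme point. -/
theorem complementary_slackness {n m : ℕ} (ℓ : ℕ) (hℓ : ℓ ≤ n + 1) (hm : 0 < m)
    (t : Fin (n + 1) → ℂ) (ht : Function.Injective t) (y : Fin (n + 1) → ℂ)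
    (x f : Fin m → ℂ) (hxt : ∀ i j, x i ≠ t j)
    (wstar : Fin m → ℝ) (hwS : inS wstar)
    (hwmax : ∀ w : Fin m → ℝ, inS w → dualFun ℓ t y x f w ≤ dualFun ℓ t y x f wstar)
    (αt βt : Fin (n + 1) → ℂ)
    (hfeas : (∑ j, wstar j * ‖baryQ t βt (x j)‖ ^ 2) = 1)
    (hattain : (∑ j, wstar j * ‖f j * baryQ t βt (x j) - baryP ℓ t y αt βt (x j)‖ ^ 2) =
      dualFun ℓ t y x f wstar)
    (hβ : ∀ j : Fin (n + 1), (j : ℕ) < ℓ → βt j ≠ 0)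
    (hqx : ∀ j, baryQ t βt (x j) ≠ 0)
    (hsd : Real.sqrt (dualFun ℓ t y x f wstar) =
      ⨆ j, ‖f j - baryP ℓ t y αt βt (x j) / baryQ t βt (x j)‖) :
    ∀ j : Fin m,
      wstar j * ((⨆ i, ‖f i - baryP ℓ t y αt βt (x i) / baryQ t βt (x i)‖) -
        ‖f j - baryP ℓ t y αt βt (x j) / baryQ t βt (x j)‖) = 0 :=
  complementary_slackness_general ℓ t y x f wstar hwS αt βt hfeas hattain hqx hsd
end

section
/- (Lower bound on the number of positive dual weights.) Assume m ≥ 2n + 2 − ℓ. Let w* ∈ S be a maximizer of the dual problem with d(w*) > 0, suppose the coefficient pair (α̃, β̃) attains d(w*), i.e., Σ_j w*_j |q̃(x_j)|² = 1 and Σ_j w*_j |f_j q̃(x_j) − p̃(x_j)|² = d(w*), and suppose β̃_j ≠ 0 for all j ∈ {1, …, ℓ} and q̃(x_j) ≠ 0 for all j ∈ {1, …, m}. Then the number of indices j ∈ {1, …, m} with w*_j > 0 is at least n + 2 − ℓ. -/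
open Finset

open Lagrange Polynomial in
theorem exists_sum_div_sub_eq_of_card_le {F ι κ : Type*} [Field F] [DecidableEq ι]
    [DecidableEq κ] {s : Finset ι} {t : ι → F} (ht : Set.InjOn t s) {T : Finset κ} {x : κ → F}
    (hx : Set.InjOn x T) (hxt : ∀ j ∈ T, ∀ i ∈ s, x j ≠ t i) (hcard : #T ≤ #s) (v : κ → F) :
    ∃ α : ι → F, ∀ j ∈ T, ∑ i ∈ s, α i / (x j - t i) = v j := by
  -- Barycentric formula: P(z)/ω(z) = Σ_i λ_i P(t_i)/(z - t_i) whenever deg P < #s, with ω the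
  -- nodal polynomial of s and λ its weights; so it suffices that P = v·ω on T.
  obtain ⟨P, hPdeg, hPx⟩ : ∃ P : F[X], P.degree < #s ∧
      ∀ j ∈ T, P.eval (x j) = v j * (nodal s t).eval (x j) :=
    ⟨_, (degree_interpolate_lt _ hx).trans_le (by exact_mod_cast hcard),
      fun j hj => eval_interpolate_at_node _ hx hj⟩
  refine ⟨fun i => nodalWeight s t i * P.eval (t i), fun j hj => ?_⟩
  have hPj := hPx j hj
  rw [eq_interpolate ht hPdeg, eval_interpolate_not_at_node _ (hxt j hj), mul_comm (v j)] at hPj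
  refine mul_left_cancel₀ (eval_nodal_not_at_node (hxt j hj)) (Eq.trans ?_ hPj)
  congr 1
  refine sum_congr rfl fun i _ => ?_
  rw [div_eq_mul_inv, mul_right_comm]

theorem baryQ_single {n : ℕ} (t : Fin (n + 1) → ℂ) (i : Fin (n + 1)) (c z : ℂ) :
    baryQ t (Pi.single i c) z = c / (z - t i) := by
  rw [baryQ, sum_eq_single i (fun j _ hj => by simp [hj]) (by simp)]
  simp

theorem baryP_of_eq_zero_of_lt {n : ℕ} (ℓ : ℕ) (t y α β : Fin (n + 1) → ℂ)
    (hβ : ∀ i : Fin (n + 1), (i : ℕ) < ℓ → β i = 0) (z : ℂ) :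
    baryP ℓ t y α β z = ∑ i ∈ univ.filter (fun i : Fin (n + 1) => ¬ (i : ℕ) < ℓ),
      α i / (z - t i) := by
  rw [baryP, sum_filter]
  refine sum_congr rfl fun i _ => ?_
  by_cases h : (i : ℕ) < ℓ <;> simp [h, hβ]

theorem dualFun_le {n m : ℕ} (ℓ : ℕ) (t y : Fin (n + 1) → ℂ) (x f : Fin m → ℂ)
    {w : Fin m → ℝ} (hw : ∀ j, 0 ≤ w j) {α β : Fin (n + 1) → ℂ}
    (hfeas : (∑ j, w j * ‖baryQ t β (x j)‖ ^ 2) = 1) :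
    dualFun ℓ t y x f w ≤ ∑ j, w j * ‖f j * baryQ t β (x j) - baryP ℓ t y α β (x j)‖ ^ 2 :=
  csInf_le ⟨0, fun _ ⟨_, _, _, hr⟩ => hr ▸ sum_nonneg fun j _ => by have := hw j; positivity⟩
    ⟨α, β, hfeas, rfl⟩

theorem inS.exists_pos {m : ℕ} {w : Fin m → ℝ} (hw : inS w) : ∃ j, 0 < w j := by
  obtain ⟨j, -, hj⟩ := exists_ne_zero_of_sum_ne_zero (hw.2.symm ▸ one_ne_zero : ∑ j, w j ≠ 0)
  exact ⟨j, (hw.1 j).lt_of_ne' hj⟩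

theorem exists_baryQ_single_normalized {n m : ℕ} (t : Fin (n + 1) → ℂ) (x : Fin m → ℂ)
    {w : Fin m → ℝ} (hw : inS w) {i : Fin (n + 1)} (hxt : ∀ j, x j ≠ t i) :
    ∃ c : ℂ, (∑ j, w j * ‖baryQ t (Pi.single i c) (x j)‖ ^ 2) = 1 := by
  obtain ⟨j₀, hj₀⟩ := hw.exists_pos
  set S := ∑ j, w j / ‖x j - t i‖ ^ 2
  have hS : 0 < S := sum_pos' (fun j _ => by have := hw.1 j; positivity)
    ⟨j₀, mem_univ _, div_pos hj₀ (pow_pos (norm_pos_iff.2 (sub_ne_zero.2 (hxt j₀))) 2)⟩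
  have hterm : ∀ j, w j * ‖baryQ t (Pi.single i ((√S)⁻¹ : ℝ)) (x j)‖ ^ 2 =
      S⁻¹ * (w j / ‖x j - t i‖ ^ 2) := fun j => by
    rw [baryQ_single, norm_div, Complex.norm_real, Real.norm_eq_abs, div_pow, sq_abs, inv_pow,
      Real.sq_sqrt hS.le]
    ring
  exact ⟨_, by rw [sum_congr rfl fun j _ => hterm j, ← mul_sum, inv_mul_cancel₀ hS.ne']⟩

theorem dualFun_nonpos_of_ncard_le {n m : ℕ} (ℓ : ℕ) {t : Fin (n + 1) → ℂ}
    (ht : Function.Injective t) (y : Fin (n + 1) → ℂ) {x : Fin m → ℂ}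
    (hx : Function.Injective x) (hxt : ∀ i j, x i ≠ t j) (f : Fin m → ℂ) {w : Fin m → ℝ}
    (hw : inS w) (hcard : {j | 0 < w j}.ncard ≤ n + 1 - ℓ) :
    dualFun ℓ t y x f w ≤ 0 := by
  set T := univ.filter fun j => 0 < w j
  set I := univ.filter fun i : Fin (n + 1) => ¬ (i : ℕ) < ℓ
  have hT : #T = {j | 0 < w j}.ncard := by
    rw [← Set.ncard_coe_finset, coe_filter]
    simp
  have hTpos : 0 < #T := card_pos.2 (let ⟨j, hj⟩ := hw.exists_pos; ⟨j, by simpa [T]⟩)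
  have hI : #I = n + 1 - ℓ := by
    have := card_filter_add_card_filter_not (s := univ) fun i : Fin (n + 1) => (i : ℕ) < ℓ
    rw [Fin.card_filter_val_lt, card_univ, Fintype.card_fin] at this
    change _ + #I = _ at this
    omega
  have hfree : ¬ ((Fin.last n : ℕ) < ℓ) := by
    rw [Fin.val_last]
    omega
  obtain ⟨c, hc⟩ := exists_baryQ_single_normalized t x hw fun j => hxt j (Fin.last n)
  obtain ⟨α, hα⟩ := exists_sum_div_sub_eq_of_card_le (s := I) (T := T) ht.injOn hx.injOn
    (fun j _ i _ => hxt j i) (by omega) fun j => f j * baryQ t (Pi.single (Fin.last n) c) (x j)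
  refine (dualFun_le ℓ t y x f hw.1 (α := α) hc).trans_eq (sum_eq_zero fun j _ => ?_)
  rcases (hw.1 j).eq_or_lt with h | h
  · simp [← h]
  · rw [baryP_of_eq_zero_of_lt ℓ t y α _
        fun i hi => Pi.single_eq_of_ne (by rintro rfl; exact hfree hi) _,
      hα j (by simp [T, h])]
    simp

theorem positive_weights_lower_bound_general {n m : ℕ} (ℓ : ℕ)
    (t : Fin (n + 1) → ℂ) (ht : Function.Injective t) (y : Fin (n + 1) → ℂ)
    (x f : Fin m → ℂ) (hx : Function.Injective x) (hxt : ∀ i j, x i ≠ t j)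
    (wstar : Fin m → ℝ) (hwS : inS wstar)
    (hdpos : 0 < dualFun ℓ t y x f wstar) :
    n + 2 - ℓ ≤ {j : Fin m | 0 < wstar j}.ncard := by
  by_contra! h
  have := dualFun_nonpos_of_ncard_le ℓ ht y hx hxt f hwS (by omega)
  linarith

/-- **Lower bound on the number of positive dual weights** (proof of Theorem 5.3 of
the paper). Assume m ≥ 2n + 2 − ℓ and the sample nodes are pairwise distinct. If
w* maximizes the dual problem with d(w*) > 0 and (α̃, β̃) attains d(w*) with
β̃_j ≠ 0 for j ≤ ℓ and q̃ nonvanishing at the sample nodes, then w* has at least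
n + 2 − ℓ positive entries. -/
theorem positive_weights_lower_bound {n m : ℕ} (ℓ : ℕ) (hℓ : ℓ ≤ n + 1) (hm : 0 < m)
    (hm2 : 2 * n + 2 - ℓ ≤ m)
    (t : Fin (n + 1) → ℂ) (ht : Function.Injective t) (y : Fin (n + 1) → ℂ)
    (x f : Fin m → ℂ) (hx : Function.Injective x) (hxt : ∀ i j, x i ≠ t j)
    (wstar : Fin m → ℝ) (hwS : inS wstar)
    (hwmax : ∀ w : Fin m → ℝ, inS w → dualFun ℓ t y x f w ≤ dualFun ℓ t y x f wstar)
    (hdpos : 0 < dualFun ℓ t y x f wstar)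
    (αt βt : Fin (n + 1) → ℂ)
    (hfeas : (∑ j, wstar j * ‖baryQ t βt (x j)‖ ^ 2) = 1)
    (hattain : (∑ j, wstar j * ‖f j * baryQ t βt (x j) - baryP ℓ t y αt βt (x j)‖ ^ 2) =
      dualFun ℓ t y x f wstar)
    (hβ : ∀ j : Fin (n + 1), (j : ℕ) < ℓ → βt j ≠ 0)
    (hqx : ∀ j, baryQ t βt (x j) ≠ 0) :
    n + 2 - ℓ ≤ {j : Fin m | 0 < wstar j}.ncard :=
  positive_weights_lower_bound_general ℓ t ht y x f hx hxt wstar hwS hdpos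
end
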